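/- Every tangent binary word is 2-balanced. -/

import Mathlib

/-- Helper for deleting one letter `c` from each maximal run of `c`s.
The flag is `true` when we are at the start of the word or just after a letter `≠ c`,
i.e. when the next occurrence of `c` starts a maximal run and must be deleted. -/
def delRunAux (c : Bool) : Bool → List Bool → List Bool
  | _, [] => []
  | del, a :: l =>
      if a = c then
        (if del then delRunAux c false l else a :: delRunAux c false l)
      else a :: delRunAux c true l

/-- Delete one letter `c` from each maximal run of `c`s in `w`. -/
def delRun (c : Bool) (w : List Bool) : List Bool := delRunAux c true w

/-- `Desub w v` : `v` is a desubstitution of the nonempty word `w`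
(letter `0` is `false`, letter `1` is `true`):
if `11` does not occur in `w` one may delete one `0` from each maximal run of `0`s,
and if `00` does not occur in `w` one may delete one `1` from each maximal run of `1`s. -/
def Desub (w v : List Bool) : Prop :=
  w ≠ [] ∧
    ((¬ [true, true] <:+: w ∧ v = delRun false w) ∨
     (¬ [false, false] <:+: w ∧ v = delRun true w))

/-- States of the three-state "diagonal" automaton. -/
inductive DiagState | Q | R | S
  deriving DecidableEq

/-- Transitions of the diagonal automaton:
Q→R on 0, R→Q on 1, R→S on 0, S→R on 1. -/
def diagStep : DiagState → Bool → Option DiagState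
  | .Q, false => some .R
  | .R, true  => some .Q
  | .R, false => some .S
  | .S, true  => some .R
  | _, _ => none

/-- States of the eight-state "non-oscillating diagonal" automaton. -/
inductive NOState | B | R | S | T | U | C | D | E
  deriving DecidableEq

/-- Transitions of the non-oscillating diagonal automaton:
B→R on 0, R→B on 1, R→S on 0, S→T on 1, T→S on 0, T→U on 1, U→E on 0, E→U on 1,
B→C on 1, C→D on 0, D→C on 1, D→E on 0. -/
def noStep : NOState → Bool → Option NOState
  | .B, false => some .R
  | .B, true  => some .C
  | .R, false => some .S
  | .R, true  => some .B
  | .S, true  => some .T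
  | .T, false => some .S
  | .T, true  => some .U
  | .U, false => some .E
  | .C, false => some .D
  | .D, false => some .E
  | .D, true  => some .C
  | .E, true  => some .U
  | _, _ => none

/-- The list of states visited when reading a word from state `q`
in a (partial deterministic) automaton, if the whole word can be read. -/
def autTraj {σ : Type} (step : σ → Bool → Option σ) : σ → List Bool → Option (List σ)
  | q, [] => some [q]
  | q, a :: l => (step q a).bind fun q' => (autTraj step q' l).map (q :: ·)

/-- A word is diagonal if it labels a path of the diagonal automaton
(all states are initial and accepting). -/
def Diagonal (w : List Bool) : Prop := ∃ q : DiagState, (autTraj diagStep q w).isSome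

/-- A word is non-oscillating diagonal if it labels a path of the non-oscillating
diagonal automaton (all states are initial and accepting). -/
def NonOscDiagonal (w : List Bool) : Prop := ∃ q : NOState, (autTraj noStep q w).isSome

/-- A word is tangent if some finite sequence of desubstitutions leads to a diagonal word. -/
def Tangent (w : List Bool) : Prop :=
  ∃ v, Relation.ReflTransGen Desub w v ∧ Diagonal v

/-- A word is tangent analytic if some finite sequence of desubstitutions leads to a
non-oscillating diagonal word. -/
def TangentAnalytic (w : List Bool) : Prop :=
  ∃ v, Relation.ReflTransGen Desub w v ∧ NonOscDiagonal v

/-- A word is `k`-balanced if any two factors of the same length have numbers of `1`s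
differing by at most `k`. -/
def BalancedWord (k : ℕ) (w : List Bool) : Prop :=
  ∀ u v : List Bool, u <:+: w → v <:+: w → u.length = v.length →
    |(u.count true : ℤ) - (v.count true : ℤ)| ≤ (k : ℤ)

/-- `pcount L n` is the complexity `p_n(L)`: the number of words of length `n` in `L`. -/
noncomputable def pcount (L : Set (List Bool)) (n : ℕ) : ℕ :=
  Set.ncard {w | w ∈ L ∧ w.length = n}

/-- The language `T^∞` of tangent words. -/
def Tinf : Set (List Bool) := {w | Tangent w}

/-- The language `T^ω` of tangent analytic words. -/
def Tomega : Set (List Bool) := {w | TangentAnalytic w}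

/-- A word `w ∈ L` is bispecial when `0w`, `1w`, `w0`, `w1` all belong to `L`. -/
def Bispecial (L : Set (List Bool)) (w : List Bool) : Prop :=
  w ∈ L ∧ (false :: w) ∈ L ∧ (true :: w) ∈ L ∧ (w ++ [false]) ∈ L ∧ (w ++ [true]) ∈ L

/-- The number of two-sided extensions `a·w·b` of `w` inside `L`. -/
noncomputable def extCount (L : Set (List Bool)) (w : List Bool) : ℕ :=
  Set.ncard {p : Bool × Bool | (p.1 :: (w ++ [p.2])) ∈ L}

/-- A weak bispecial word of `L`. -/
def WeakBispecial (L : Set (List Bool)) (w : List Bool) : Prop :=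
  Bispecial L w ∧ extCount L w = 2

/-- A strong bispecial word of `L`. -/
def StrongBispecial (L : Set (List Bool)) (w : List Bool) : Prop :=
  Bispecial L w ∧ extCount L w = 4

/-- `wb L n` : the number of weak bispecial words of length `n` in `L`. -/
noncomputable def wb (L : Set (List Bool)) (n : ℕ) : ℕ :=
  Set.ncard {w | WeakBispecial L w ∧ w.length = n}

/-- `sb L n` : the number of strong bispecial words of length `n` in `L`. -/
noncomputable def sb (L : Set (List Bool)) (n : ℕ) : ℕ :=
  Set.ncard {w | StrongBispecial L w ∧ w.length = n}

/-- A language is factorial if it is closed under taking factors. -/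
def FactorialLang (L : Set (List Bool)) : Prop :=
  ∀ w ∈ L, ∀ u : List Bool, u <:+: w → u ∈ L

/-- A language is extendable if every word extends on both sides within the language. -/
def ExtendableLang (L : Set (List Bool)) : Prop :=
  ∀ w ∈ L, (∃ a : Bool, (a :: w) ∈ L) ∧ (∃ b : Bool, (w ++ [b]) ∈ L)

/-!
On a diagonal word the states `Q`, `R`, `S` have heights `2`, `1`, `0`, and reading `1` (resp. `0`)
raises (resp. lowers) the height by one. Hence every factor `u` satisfies
`|2 |u|₁ - |u|| ≤ 2`, and two factors of the same length differ by at most two `1`s.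

Balance lifts back along a desubstitution. If `11` does not occur in `w`, deleting one `0` per
run of `0`s maps each factor `u` of `w` to a factor `u'` of the desubstituted word with the same
number of `1`s, and between `|u|₁ - 1` and `|u|₁ + 1` letters are deleted. For factors `u`, `v`
of the same length, either `u'` is at most as long as `v'` and is compared with a prefix of `v'`,
or fewer letters were deleted from `u` than from `v`, which forces `|u|₁ ≤ |v|₁ + 1`.
Exchanging the letters handles the deletion of `1`s.
-/
theorem List.count_true_map_not (u : List Bool) : (u.map not).count true = u.count false :=
  u.count_map_of_injective not Bool.not_injective false

theorem balancedWord_iff_count_le {k : ℕ} {w : List Bool} :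
    BalancedWord k w ↔ ∀ u v : List Bool, u <:+: w → v <:+: w → u.length = v.length →
      u.count true ≤ v.count true + k := by
  refine ⟨fun h u v hu hv hl => ?_, fun h u v hu hv hl => ?_⟩
  · have := (abs_le.mp (h u v hu hv hl)).2
    omega
  · have := h u v hu hv hl
    have := h v u hv hu hl.symm
    rw [abs_le]
    omega

theorem BalancedWord.map_not {k : ℕ} {w : List Bool} (h : BalancedWord k w) :
    BalancedWord k (w.map not) := by
  rw [balancedWord_iff_count_le] at h ⊢
  intro u v hu hv hl
  have hu' : u.map not <:+: w := by simpa [Bool.involutive_not.comp_self] using hu.map not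
  have hv' : v.map not <:+: w := by simpa [Bool.involutive_not.comp_self] using hv.map not
  have := h _ _ hv' hu' (by simp [hl])
  have := u.count_false_add_count_true
  have := v.count_false_add_count_true
  simp only [List.count_true_map_not] at *
  omega

theorem balancedWord_map_not_iff {k : ℕ} {w : List Bool} :
    BalancedWord k (w.map not) ↔ BalancedWord k w :=
  ⟨fun h => by simpa [Bool.involutive_not.comp_self] using h.map_not, BalancedWord.map_not⟩

theorem exists_delRunAux_append (c b : Bool) (x y : List Bool) :
    ∃ b', delRunAux c b (x ++ y) = delRunAux c b x ++ delRunAux c b' y := by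
  induction x generalizing b with
  | nil => exact ⟨b, by cases b <;> rfl⟩
  | cons a l ih =>
    by_cases ha : a = c
    · obtain ⟨b', hb'⟩ := ih false
      exact ⟨b', by cases b <;> simp [delRunAux, ha, hb']⟩
    · obtain ⟨b', hb'⟩ := ih true
      exact ⟨b', by simp [delRunAux, ha, hb']⟩

theorem exists_delRunAux_infix_delRun {c : Bool} {u w : List Bool} (h : u <:+: w) :
    ∃ b, delRunAux c b u <:+: delRun c w := by
  obtain ⟨s, t, rfl⟩ := h
  obtain ⟨b, hb⟩ := exists_delRunAux_append c true s (u ++ t)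
  obtain ⟨b', hb'⟩ := exists_delRunAux_append c b u t
  exact ⟨b, delRunAux c true s, delRunAux c b' t, by
    simp only [delRun, List.append_assoc, hb, hb']⟩

theorem count_delRunAux (c b : Bool) (u : List Bool) :
    (delRunAux c b u).count (!c) = u.count (!c) := by
  induction u generalizing b with
  | nil => cases b <;> rfl
  | cons a l ih => by_cases ha : a = c <;> cases b <;> simp [delRunAux, ha, ih, List.count_cons]

theorem length_le_length_delRunAux (b : Bool) (u : List Bool) :
    u.length ≤ (delRunAux false b u).length + u.count true + b.toNat := by
  induction u generalizing b with
  | nil => simp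
  | cons a l ih =>
    have h₀ := ih false
    have h₁ := ih true
    cases a <;> cases b <;> simp [delRunAux] at h₀ h₁ ⊢ <;> omega

theorem length_delRunAux_add_count_le :
    ∀ (b : Bool) (u : List Bool), ¬ [true, true] <:+: u →
      (delRunAux false b u).length + u.count true ≤ u.length + 1
  | b, [], _ => by cases b <;> simp [delRunAux]
  | b, false :: l, h => by
    have := length_delRunAux_add_count_le false l
      (fun h' => h (h'.trans (List.infix_cons (List.infix_refl l))))
    cases b <;> simp [delRunAux] <;> omega
  | b, [true], _ => by cases b <;> simp [delRunAux]
  | b, true :: false :: l, h => by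
    have := length_delRunAux_add_count_le false l
      (fun h' => h (h'.trans (List.infix_cons (List.infix_cons (List.infix_refl l)))))
    cases b <;> simp [delRunAux] <;> omega
  | _, true :: true :: _, h => absurd (List.infix_append [] [true, true] _) h

theorem delRunAux_map_not (c b : Bool) (u : List Bool) :
    delRunAux (!c) b (u.map not) = (delRunAux c b u).map not := by
  induction u generalizing b with
  | nil => cases b <;> rfl
  | cons a l ih => by_cases ha : a = c <;> cases b <;> simp [delRunAux, ha, ih]

theorem BalancedWord.of_delRun_false {k : ℕ} {w : List Bool} (hk : 1 ≤ k)
    (h11 : ¬ [true, true] <:+: w) (h : BalancedWord k (delRun false w)) : BalancedWord k w := by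
  rw [balancedWord_iff_count_le] at h ⊢
  intro u v hu hv hl
  obtain ⟨b, hbu⟩ := exists_delRunAux_infix_delRun (c := false) hu
  obtain ⟨b', hbv⟩ := exists_delRunAux_infix_delRun (c := false) hv
  set u' := delRunAux false b u
  set v' := delRunAux false b' v
  have hcu : u'.count true = u.count true := count_delRunAux false b u
  have hcv : v'.count true = v.count true := count_delRunAux false b' v
  by_cases hlen : u'.length ≤ v'.length
  · have hp := h u' (v'.take u'.length) hbu ((List.take_prefix _ _).isInfix.trans hbv)
      (by simp [hlen])
    have := (List.take_sublist u'.length v').count_le true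
    omega
  · have hu_len : u'.length + u.count true ≤ u.length + 1 :=
      length_delRunAux_add_count_le b u fun h' => h11 (h'.trans hu)
    have hv_len : v.length ≤ v'.length + v.count true + b'.toNat :=
      length_le_length_delRunAux b' v
    have := b'.toNat_le
    omega

theorem BalancedWord.of_desub {k : ℕ} {w v : List Bool} (hk : 1 ≤ k) (hd : Desub w v)
    (hv : BalancedWord k v) : BalancedWord k w := by
  obtain ⟨-, ⟨h11, rfl⟩ | ⟨h00, rfl⟩⟩ := hd
  · exact hv.of_delRun_false hk h11
  · have h11 : ¬ [true, true] <:+: w.map not := fun h' => h00 <| by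
      simpa [Bool.involutive_not.comp_self] using h'.map not
    have hdel : delRun false (w.map not) = (delRun true w).map not :=
      delRunAux_map_not true true w
    rw [← balancedWord_map_not_iff]
    exact BalancedWord.of_delRun_false hk h11 (hdel ▸ hv.map_not)

section Automaton

variable {σ : Type} {step : σ → Bool → Option σ}

theorem autTraj_cons_isSome {q : σ} {a : Bool} {l : List Bool} :
    (autTraj step q (a :: l)).isSome ↔
      ∃ q', step q a = some q' ∧ (autTraj step q' l).isSome := by
  cases h : step q a <;> simp [autTraj, h]

theorem autTraj_append_isSome {q : σ} {x y : List Bool}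
    (h : (autTraj step q (x ++ y)).isSome) :
    (autTraj step q x).isSome ∧ ∃ q', (autTraj step q' y).isSome := by
  induction x generalizing q with
  | nil => exact ⟨rfl, q, h⟩
  | cons a l ih =>
    obtain ⟨q', hq', h'⟩ := autTraj_cons_isSome.mp h
    exact ⟨autTraj_cons_isSome.mpr ⟨q', hq', (ih h').1⟩, (ih h').2⟩

theorem exists_autTraj_isSome_of_infix {q : σ} {u w : List Bool}
    (h : (autTraj step q w).isSome) (hu : u <:+: w) : ∃ q', (autTraj step q' u).isSome := by
  obtain ⟨s, t, rfl⟩ := hu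
  obtain ⟨q', h'⟩ := (autTraj_append_isSome (List.append_assoc s u t ▸ h)).2
  exact ⟨q', (autTraj_append_isSome h').1⟩

end Automaton

def diagHeight : DiagState → ℤ
  | .Q => 2
  | .R => 1
  | .S => 0

theorem diagHeight_nonneg_and_le_two (q : DiagState) :
    0 ≤ diagHeight q ∧ diagHeight q ≤ 2 := by
  cases q <;> simp [diagHeight]

theorem diagHeight_of_diagStep {q q' : DiagState} {a : Bool} (h : diagStep q a = some q') :
    diagHeight q' = diagHeight q + 2 * a.toNat - 1 := by
  cases q <;> cases a <;> simp [diagStep] at h <;> subst h <;> rfl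

theorem exists_diagHeight_sub_eq {q : DiagState} {u : List Bool}
    (h : (autTraj diagStep q u).isSome) :
    ∃ q', diagHeight q' - diagHeight q = 2 * u.count true - u.length := by
  induction u generalizing q with
  | nil => exact ⟨q, by simp⟩
  | cons a l ih =>
    obtain ⟨q₁, hq₁, h'⟩ := autTraj_cons_isSome.mp h
    obtain ⟨q', hq'⟩ := ih h'
    refine ⟨q', ?_⟩
    rw [diagHeight_of_diagStep hq₁] at hq'
    cases a <;> simp at hq' ⊢ <;> linarith

theorem Diagonal.balancedWord_two {w : List Bool} (h : Diagonal w) : BalancedWord 2 w := by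
  obtain ⟨q, hq⟩ := h
  rw [balancedWord_iff_count_le]
  intro u v hu hv hl
  obtain ⟨q₁, hq₁⟩ := exists_autTraj_isSome_of_infix hq hu
  obtain ⟨q₂, hq₂⟩ := exists_autTraj_isSome_of_infix hq hv
  obtain ⟨q₁', e₁⟩ := exists_diagHeight_sub_eq hq₁
  obtain ⟨q₂', e₂⟩ := exists_diagHeight_sub_eq hq₂
  have := diagHeight_nonneg_and_le_two q₁
  have := diagHeight_nonneg_and_le_two q₂
  have := diagHeight_nonneg_and_le_two q₁'
  have := diagHeight_nonneg_and_le_two q₂'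
  omega

/-- every tangent word is 2-balanced. -/
theorem tangent_two_balanced (w : List Bool) (h : Tangent w) :
    BalancedWord 2 w := by
  obtain ⟨v, hwv, hv⟩ := h
  induction hwv using Relation.ReflTransGen.head_induction_on with
  | refl => exact hv.balancedWord_two
  | head hd _ ih => exact ih.of_desub one_le_two hd
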